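/- arXiv:2110.01664 — 4 statements merged into one kernel-verified Lean document; each statement's English description precedes it below -/
import Mathlib

section
/- Let Y be a real random variable on a probability space with CDF F(z) = P(Y ≤ z), and let Z be a real random variable independent of Y with law ν. Then for every measurable function G : ℝ → (0,1), the expected g-loss satisfies E[ℓ(1_{Y ≤ Z}, G(Z))] ≥ ∫ H(F(z)) dν(z), where the right-hand side is the value of the loss at the true CDF (i.e. the loss is minimized over all measurable (0,1)-valued functions by G = F). -/
open MeasureTheory ProbabilityTheory

/-- Binary cross-entropy loss `ℓ(t, p) = −(t·log p + (1 − t)·log(1 − p))`. -/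
noncomputable def bce (t p : ℝ) : ℝ := -(t * Real.log p + (1 - t) * Real.log (1 - p))

/-- Binary entropy `H(a) = −(a·log a + (1 − a)·log(1 − a))` (`0·log 0 = 0` automatic). -/
noncomputable def binEntropy' (a : ℝ) : ℝ := -(a * Real.log a + (1 - a) * Real.log (1 - a))

/-!
Since `ℓ(t, p)` is affine in `t`, independence and Tonelli turn the expected loss into
`∫ ℓ(F(z), G(z)) dν(z)`, and pointwise `ℓ(a, p) ≥ H(a)` is Gibbs' inequality,
which follows from `log x ≤ x - 1`.
-/

open Real

lemma bce_eq (t p : ℝ) : bce t p = t * -log p + (1 - t) * -log (1 - p) := by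
  rw [bce]; ring

lemma Measurable.bce {α : Type*} [MeasurableSpace α] {f g : α → ℝ} (hf : Measurable f)
    (hg : Measurable g) : Measurable fun x ↦ bce (f x) (g x) := by
  unfold _root_.bce
  fun_prop

lemma mul_log_sub_log_le {a p : ℝ} (ha : 0 ≤ a) (hp : 0 < p) :
    a * (log p - log a) ≤ p - a := by
  rcases ha.eq_or_lt with rfl | ha
  · simpa using hp.le
  calc a * (log p - log a) = a * log (p / a) := by rw [log_div hp.ne' ha.ne']
    _ ≤ a * (p / a - 1) := by gcongr; exact log_le_sub_one_of_pos (div_pos hp ha)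
    _ = p - a := by field_simp

theorem binEntropy'_le_bce {a p : ℝ} (ha0 : 0 ≤ a) (ha1 : a ≤ 1) (hp0 : 0 < p) (hp1 : p < 1) :
    binEntropy' a ≤ bce a p := by
  have h₁ := mul_log_sub_log_le ha0 hp0
  have h₂ := mul_log_sub_log_le (sub_nonneg.2 ha1) (sub_pos.2 hp1)
  simp only [binEntropy', bce]
  linarith

theorem lintegral_ofReal_bce_indicator_Iic (μ : Measure ℝ) [IsProbabilityMeasure μ] (z : ℝ)
    {p : ℝ} (hp0 : 0 < p) (hp1 : p < 1) :
    ∫⁻ y, ENNReal.ofReal (bce (if y ≤ z then 1 else 0) p) ∂μ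
      = ENNReal.ofReal (bce (cdf μ z) p) := by
  have hlog₁ : 0 ≤ -log p := neg_nonneg.2 (log_nonpos hp0.le hp1.le)
  have hlog₂ : 0 ≤ -log (1 - p) := neg_nonneg.2 (log_nonpos (by linarith) (by linarith))
  have hpiece : (fun y ↦ ENNReal.ofReal (bce (if y ≤ z then 1 else 0) p))
      = (Set.Iic z).piecewise (fun _ ↦ ENNReal.ofReal (-log p))
          (fun _ ↦ ENNReal.ofReal (-log (1 - p))) := by
    ext y
    by_cases hy : y ≤ z <;> simp [Set.piecewise, hy, bce_eq]
  rw [hpiece, lintegral_piecewise measurableSet_Iic, setLIntegral_const, setLIntegral_const,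
    prob_compl_eq_one_sub measurableSet_Iic, ← ofReal_cdf, ← ENNReal.ofReal_one,
    ← ENNReal.ofReal_sub _ (cdf_nonneg μ z), ← ENNReal.ofReal_mul hlog₁,
    ← ENNReal.ofReal_mul hlog₂, ← ENNReal.ofReal_add (mul_nonneg hlog₁ (cdf_nonneg μ z))
      (mul_nonneg hlog₂ (sub_nonneg.2 (cdf_le_one μ z))), bce_eq]
  ring_nf

theorem ProbabilityTheory.IndepFun.lintegral_comp_eq_lintegral_lintegral_map {Ω α β : Type*}
    [MeasurableSpace Ω] [MeasurableSpace α] [MeasurableSpace β] {P : Measure Ω}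
    [IsFiniteMeasure P] {X : Ω → α} {Y : Ω → β} (hX : AEMeasurable X P) (hY : AEMeasurable Y P)
    (hXY : IndepFun X Y P) {f : α × β → ENNReal} (hf : Measurable f) :
    ∫⁻ ω, f (X ω, Y ω) ∂P = ∫⁻ y, ∫⁻ x, f (x, y) ∂(P.map X) ∂(P.map Y) := by
  rw [← lintegral_map' hf.aemeasurable (hX.prodMk hY),
    (indepFun_iff_map_prod_eq_prod_map_map hX hY).1 hXY, lintegral_prod_symm' _ hf]

/-- Let `Y` be a real random variable with CDF `F(z) = P(Y ≤ z)`, and `Z` a real random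
variable independent of `Y` with law `ν = P.map Z`. Then for every measurable
`G : ℝ → (0,1)`, the expected g-loss satisfies
`E[ℓ(1_{Y ≤ Z}, G(Z))] ≥ ∫ H(F(z)) dν(z)` (expectations of these nonnegative quantities
are written as lower Lebesgue integrals). -/
theorem gloss_ge_entropy_of_cdf
    {Ω : Type*} [MeasurableSpace Ω] (P : Measure Ω) [IsProbabilityMeasure P]
    (Y Z : Ω → ℝ) (hY : Measurable Y) (hZ : Measurable Z)
    (hindep : IndepFun Y Z P)
    (G : ℝ → ℝ) (hG : Measurable G) (hG01 : ∀ z, G z ∈ Set.Ioo (0 : ℝ) 1) :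
    ∫⁻ ω, ENNReal.ofReal (bce (if Y ω ≤ Z ω then 1 else 0) (G (Z ω))) ∂P
      ≥ ∫⁻ z, ENNReal.ofReal (binEntropy' (cdf (P.map Y) z)) ∂(P.map Z) := by
  have : IsProbabilityMeasure (P.map Y) := Measure.isProbabilityMeasure_map hY.aemeasurable
  have hloss : Measurable fun q : ℝ × ℝ ↦
      ENNReal.ofReal (bce (if q.1 ≤ q.2 then 1 else 0) (G q.2)) := by
    refine (Measurable.bce ?_ (hG.comp measurable_snd)).ennreal_ofReal
    exact Measurable.ite (measurableSet_le measurable_fst measurable_snd) measurable_const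
      measurable_const
  rw [ge_iff_le, hindep.lintegral_comp_eq_lintegral_lintegral_map hY.aemeasurable
    hZ.aemeasurable hloss]
  refine lintegral_mono fun z ↦ ?_
  obtain ⟨hp0, hp1⟩ := hG01 z
  rw [lintegral_ofReal_bce_indicator_Iic _ z hp0 hp1]
  exact ENNReal.ofReal_le_ofReal
    (binEntropy'_le_bce (cdf_nonneg _ z) (cdf_le_one _ z) hp0 hp1)
end

section
/- (Optimal solution of the g-loss; Proposition S3 of the paper.) Let (Ω, P) be a probability space, X : Ω → 𝒳 with 𝒳 a standard Borel space, Y : Ω → ℝ, and let F(x, z) denote the conditional CDF of Y given X = x. Let Z be a real random variable with law ν, independent of the pair (X, Y). Then for every jointly measurable g : ℝ × 𝒳 → (0,1), E[ℓ(1_{Y ≤ Z}, g(Z, X))] ≥ ∫∫ H(F(x, z)) dν(z) dμ_X(x), where μ_X is the law of X; the right-hand side is the infimum of the loss and is attained by g(z, x) = F(x, z) whenever F(x, z) ∈ (0,1) ν⊗μ_X-a.e. -/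
open MeasureTheory ProbabilityTheory

section Aux

open Set ENNReal

lemma gibbs_real {a p : ℝ} (ha0 : 0 ≤ a) (ha1 : a ≤ 1) (hp0 : 0 < p) (hp1 : p < 1) :
    binEntropy' a ≤ -Real.log p * a + -Real.log (1 - p) * (1 - a) := by
  have hlogp : Real.log p ≤ 0 := Real.log_nonpos hp0.le hp1.le
  have hlogq : Real.log (1 - p) ≤ 0 := Real.log_nonpos (by linarith) (by linarith)
  rcases eq_or_lt_of_le ha0 with h0 | h0
  · simp [binEntropy', ← h0]; linarith
  rcases eq_or_lt_of_le ha1 with h1 | h1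
  · simp [binEntropy', h1]; linarith
  · have ha1' : 0 < 1 - a := by linarith
    have e1 : a * Real.log (p / a) ≤ p - a := by
      have := mul_le_mul_of_nonneg_left (Real.log_le_sub_one_of_pos (div_pos hp0 h0)) ha0
      have h : a * (p / a - 1) = p - a := by field_simp
      linarith [this, h.le]
    have e2 : (1 - a) * Real.log ((1 - p) / (1 - a)) ≤ (1 - p) - (1 - a) := by
      have := mul_le_mul_of_nonneg_left
        (Real.log_le_sub_one_of_pos (div_pos (show (0:ℝ) < 1 - p by linarith) ha1')) ha1'.le
      have h : (1 - a) * ((1 - p) / (1 - a) - 1) = (1 - p) - (1 - a) := by field_simp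
      linarith [this, h.le]
    rw [Real.log_div hp0.ne' h0.ne'] at e1
    rw [Real.log_div (show (1:ℝ) - p ≠ 0 by intro h; linarith) ha1'.ne'] at e2
    simp only [binEntropy']
    nlinarith [e1, e2]

lemma gibbs_ennreal {a p : ℝ} (ha0 : 0 ≤ a) (ha1 : a ≤ 1) (hp : p ∈ Set.Ioo (0:ℝ) 1) :
    ENNReal.ofReal (binEntropy' a) ≤
      ENNReal.ofReal (-Real.log p) * ENNReal.ofReal a +
        ENNReal.ofReal (-Real.log (1 - p)) * (1 - ENNReal.ofReal a) := by
  have hlogp : 0 ≤ -Real.log p := by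
    have := Real.log_nonpos hp.1.le hp.2.le; linarith
  have hlogq : 0 ≤ -Real.log (1 - p) := by
    have := Real.log_nonpos (show (0:ℝ) ≤ 1 - p by linarith [hp.2])
      (show (1:ℝ) - p ≤ 1 by linarith [hp.1]); linarith
  have h1 : (1 : ℝ≥0∞) - ENNReal.ofReal a = ENNReal.ofReal (1 - a) := by
    rw [ENNReal.ofReal_sub _ ha0, ENNReal.ofReal_one]
  rw [h1, ← ENNReal.ofReal_mul hlogp, ← ENNReal.ofReal_mul hlogq,
    ← ENNReal.ofReal_add (by positivity) (mul_nonneg hlogq (by linarith))]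
  exact ENNReal.ofReal_le_ofReal (gibbs_real ha0 ha1 hp.1 hp.2)

lemma gibbs_eq {a : ℝ} (h : a ∈ Set.Ioo (0:ℝ) 1) :
    ENNReal.ofReal (-Real.log a) * ENNReal.ofReal a +
      ENNReal.ofReal (-Real.log (1 - a)) * (1 - ENNReal.ofReal a)
      = ENNReal.ofReal (binEntropy' a) := by
  have hla : 0 ≤ -Real.log a := by
    have := Real.log_nonpos h.1.le h.2.le; linarith
  have hlb : 0 ≤ -Real.log (1 - a) := by
    have := Real.log_nonpos (show (0:ℝ) ≤ 1 - a by linarith [h.2])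
      (show (1:ℝ) - a ≤ 1 by linarith [h.1]); linarith
  have h1 : (1 : ℝ≥0∞) - ENNReal.ofReal a = ENNReal.ofReal (1 - a) := by
    rw [ENNReal.ofReal_sub _ h.1.le, ENNReal.ofReal_one]
  rw [h1, ← ENNReal.ofReal_mul hla, ← ENNReal.ofReal_mul hlb,
    ← ENNReal.ofReal_add (mul_nonneg hla h.1.le) (mul_nonneg hlb (by linarith [h.2]))]
  congr 1
  simp only [binEntropy']; ring

lemma bce_ite (c : Prop) [Decidable c] (p : ℝ) :
    bce (if c then 1 else 0) p = (if c then -Real.log p else -Real.log (1 - p)) := by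
  split <;> simp [bce]

lemma lintegral_ite_le (m : Measure ℝ) [IsProbabilityMeasure m] (z : ℝ) (A B : ℝ≥0∞) :
    ∫⁻ y, (if y ≤ z then A else B) ∂m = A * m (Iic z) + B * (1 - m (Iic z)) := by
  have h : (fun y => if y ≤ z then A else B)
      = fun y => (Iic z).indicator (fun _ => A) y + ((Iic z)ᶜ).indicator (fun _ => B) y := by
    ext y; by_cases hy : y ≤ z <;> simp [hy, indicator_apply, not_le.mp]
  rw [h, lintegral_add_left (measurable_const.indicator measurableSet_Iic),
    lintegral_indicator measurableSet_Iic, lintegral_indicator measurableSet_Iic.compl,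
    setLIntegral_const, setLIntegral_const, prob_compl_eq_one_sub measurableSet_Iic]

variable {𝓧 : Type*} [MeasurableSpace 𝓧]

/-- The conditional-CDF kernel of a measure on `𝓧 × ℝ`. -/
noncomputable def cdfKer (ρ : Measure (𝓧 × ℝ)) : Kernel 𝓧 ℝ :=
  ⟨fun x => (condCDF ρ x).measure, measurable_measure_condCDF ρ⟩

lemma cdfKer_apply (ρ : Measure (𝓧 × ℝ)) (x : 𝓧) : cdfKer ρ x = (condCDF ρ x).measure := rfl

instance (ρ : Measure (𝓧 × ℝ)) : IsMarkovKernel (cdfKer ρ) :=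
  ⟨fun x => cdfKer_apply ρ x ▸ ProbabilityTheory.instIsProbabilityMeasureCondCDF ρ x⟩

lemma cdfKer_Iic (ρ : Measure (𝓧 × ℝ)) (x : 𝓧) (z : ℝ) :
    cdfKer ρ x (Iic z) = ENNReal.ofReal (condCDF ρ x z) := measure_condCDF_Iic ρ x z

lemma measurable_cdfKer_Iic (ρ : Measure (𝓧 × ℝ)) :
    Measurable fun p : 𝓧 × ℝ => cdfKer ρ p.1 (Iic p.2) := by
  have ht : MeasurableSet {q : (𝓧 × ℝ) × ℝ | q.2 ≤ q.1.2} :=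
    measurableSet_le measurable_snd measurable_fst.snd
  exact Kernel.measurable_kernel_prodMk_left
    (κ := (cdfKer ρ).comap Prod.fst measurable_fst) ht

lemma measurable_condCDF' (ρ : Measure (𝓧 × ℝ)) :
    Measurable fun p : 𝓧 × ℝ => condCDF ρ p.1 p.2 := by
  have h := (ENNReal.measurable_toReal.comp (measurable_cdfKer_Iic ρ))
  convert h using 1
  ext p
  simp [cdfKer_Iic, ENNReal.toReal_ofReal (condCDF_nonneg ρ p.1 p.2)]

lemma compProd_cdfKer (ρ : Measure (𝓧 × ℝ)) [IsFiniteMeasure ρ] :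
    ρ.fst ⊗ₘ cdfKer ρ = ρ := by
  ext s hs
  rw [Measure.compProd_apply hs]
  have h := lintegral_toKernel_mem (isCondKernelCDF_condCDF ρ) () hs
  simpa [Kernel.const_apply, IsCondKernelCDF.toKernel_apply, cdfKer_apply] using h

/-- Master computation: the expected BCE loss as a double integral. -/
lemma loss_eq {Ω : Type*} [MeasurableSpace Ω] (P : Measure Ω) [IsProbabilityMeasure P]
    (X : Ω → 𝓧) (Y Z : Ω → ℝ) (hX : Measurable X) (hY : Measurable Y) (hZ : Measurable Z)
    (hindep : IndepFun (fun ω => (X ω, Y ω)) Z P)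
    (G : ℝ × 𝓧 → ℝ) (hG : Measurable G) :
    ∫⁻ ω, ENNReal.ofReal (bce (if Y ω ≤ Z ω then 1 else 0) (G (Z ω, X ω))) ∂P
      = ∫⁻ x, ∫⁻ z,
          (ENNReal.ofReal (-Real.log (G (z, x)))
              * ENNReal.ofReal (condCDF (P.map (fun ω => (X ω, Y ω))) x z)
            + ENNReal.ofReal (-Real.log (1 - G (z, x)))
              * (1 - ENNReal.ofReal (condCDF (P.map (fun ω => (X ω, Y ω))) x z)))
          ∂(P.map Z) ∂(P.map X) := by
  set ρ : Measure (𝓧 × ℝ) := P.map (fun ω => (X ω, Y ω)) with hρ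
  have hXY : Measurable fun ω => (X ω, Y ω) := hX.prodMk hY
  have hρP : IsProbabilityMeasure ρ := Measure.isProbabilityMeasure_map hXY.aemeasurable
  have hνP : IsProbabilityMeasure (P.map Z) := Measure.isProbabilityMeasure_map hZ.aemeasurable
  set ν : Measure ℝ := P.map Z with hν
  set Φ : (𝓧 × ℝ) × ℝ → ℝ≥0∞ := fun q =>
    if q.1.2 ≤ q.2 then ENNReal.ofReal (-Real.log (G (q.2, q.1.1)))
    else ENNReal.ofReal (-Real.log (1 - G (q.2, q.1.1))) with hΦdef
  have hGc : Measurable fun q : (𝓧 × ℝ) × ℝ => G (q.2, q.1.1) :=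
    hG.comp (measurable_snd.prodMk measurable_fst.fst)
  have hΦ : Measurable Φ := by
    refine Measurable.ite (measurableSet_le measurable_fst.snd measurable_snd) ?_ ?_
    · exact ((Real.measurable_log.comp hGc).neg).ennreal_ofReal
    · exact ((Real.measurable_log.comp (measurable_const.sub hGc)).neg).ennreal_ofReal
  have hmap : P.map (fun ω => ((X ω, Y ω), Z ω)) = ρ.prod ν :=
    (indepFun_iff_map_prod_eq_prod_map_map hXY.aemeasurable hZ.aemeasurable).mp hindep
  calc
    ∫⁻ ω, ENNReal.ofReal (bce (if Y ω ≤ Z ω then 1 else 0) (G (Z ω, X ω))) ∂P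
        = ∫⁻ ω, Φ ((X ω, Y ω), Z ω) ∂P := by
          refine lintegral_congr fun ω => ?_
          rw [bce_ite]
          by_cases h : Y ω ≤ Z ω <;> simp [hΦdef, h]
    _ = ∫⁻ q, Φ q ∂(ρ.prod ν) := by
          rw [← hmap, lintegral_map hΦ (hXY.prodMk hZ)]
    _ = ∫⁻ p, ∫⁻ z, Φ (p, z) ∂ν ∂ρ := lintegral_prod Φ hΦ.aemeasurable
    _ = ∫⁻ x, ∫⁻ y, ∫⁻ z, Φ ((x, y), z) ∂ν ∂(cdfKer ρ x) ∂ρ.fst := by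
          conv_lhs => rw [← compProd_cdfKer ρ]
          exact Measure.lintegral_compProd hΦ.lintegral_prod_right'
    _ = ∫⁻ x, ∫⁻ z, ∫⁻ y, Φ ((x, y), z) ∂(cdfKer ρ x) ∂ν ∂ρ.fst := by
          refine lintegral_congr fun x => ?_
          exact lintegral_lintegral_swap
            ((hΦ.comp (((measurable_const.prodMk measurable_fst)).prodMk
              measurable_snd)).aemeasurable)
    _ = ∫⁻ x, ∫⁻ z,
          (ENNReal.ofReal (-Real.log (G (z, x))) * ENNReal.ofReal (condCDF ρ x z)
            + ENNReal.ofReal (-Real.log (1 - G (z, x)))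
              * (1 - ENNReal.ofReal (condCDF ρ x z))) ∂ν ∂ρ.fst := by
          refine lintegral_congr fun x => lintegral_congr fun z => ?_
          rw [show (fun y => Φ ((x, y), z))
              = fun y => if y ≤ z then ENNReal.ofReal (-Real.log (G (z, x)))
                else ENNReal.ofReal (-Real.log (1 - G (z, x))) from rfl]
          rw [lintegral_ite_le, cdfKer_Iic]
    _ = ∫⁻ x, ∫⁻ z,
          (ENNReal.ofReal (-Real.log (G (z, x))) * ENNReal.ofReal (condCDF ρ x z)
            + ENNReal.ofReal (-Real.log (1 - G (z, x)))
              * (1 - ENNReal.ofReal (condCDF ρ x z))) ∂ν ∂(P.map X) := by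
          rw [hρ, Measure.fst_map_prodMk hY]

end Aux

/-- (Optimal solution of the g-loss.) `X : Ω → 𝒳` (standard Borel), `Y : Ω → ℝ`, with
`F(x, z) = condCDF (law of (X, Y)) x z` the conditional CDF of `Y` given `X = x`; `Z` is a real
random variable with law `ν = P.map Z`, independent of the pair `(X, Y)`. For every jointly
measurable `g : ℝ × 𝒳 → (0,1)`,
`E[ℓ(1_{Y ≤ Z}, g(Z, X))] ≥ ∫∫ H(F(x, z)) dν(z) dμ_X(x)`,
and the bound is attained by `g(z, x) = F(x, z)` whenever `F(x, z) ∈ (0,1)` for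
`ν ⊗ μ_X`-a.e. `(z, x)`. -/
theorem gloss_optimal_solution
    {𝓧 : Type*} [MeasurableSpace 𝓧] [StandardBorelSpace 𝓧]
    {Ω : Type*} [MeasurableSpace Ω] (P : Measure Ω) [IsProbabilityMeasure P]
    (X : Ω → 𝓧) (Y Z : Ω → ℝ) (hX : Measurable X) (hY : Measurable Y) (hZ : Measurable Z)
    (hindep : IndepFun (fun ω => (X ω, Y ω)) Z P) :
    (∀ g : ℝ × 𝓧 → ℝ, Measurable g → (∀ p, g p ∈ Set.Ioo (0 : ℝ) 1) →
      ∫⁻ ω, ENNReal.ofReal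
          (bce (if Y ω ≤ Z ω then 1 else 0) (g (Z ω, X ω))) ∂P
        ≥ ∫⁻ x, ∫⁻ z, ENNReal.ofReal
            (binEntropy' (condCDF (P.map (fun ω => (X ω, Y ω))) x z)) ∂(P.map Z) ∂(P.map X))
    ∧ ((∀ᵐ p ∂((P.map Z).prod (P.map X)),
          condCDF (P.map (fun ω => (X ω, Y ω))) p.2 p.1 ∈ Set.Ioo (0 : ℝ) 1) →
        ∫⁻ ω, ENNReal.ofReal
            (bce (if Y ω ≤ Z ω then 1 else 0)
              (condCDF (P.map (fun ω => (X ω, Y ω))) (X ω) (Z ω))) ∂P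
          = ∫⁻ x, ∫⁻ z, ENNReal.ofReal
              (binEntropy' (condCDF (P.map (fun ω => (X ω, Y ω))) x z)) ∂(P.map Z) ∂(P.map X)) := by
  have hXY : Measurable fun ω => (X ω, Y ω) := hX.prodMk hY
  have hμXP : IsProbabilityMeasure (P.map X) := Measure.isProbabilityMeasure_map hX.aemeasurable
  have hνP : IsProbabilityMeasure (P.map Z) := Measure.isProbabilityMeasure_map hZ.aemeasurable
  constructor
  · intro g hg hg01
    rw [loss_eq P X Y Z hX hY hZ hindep g hg]
    refine lintegral_mono fun x => lintegral_mono fun z => ?_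
    exact gibbs_ennreal (condCDF_nonneg _ x z) (condCDF_le_one _ x z) (hg01 (z, x))
  · intro hae
    have hGmeas : Measurable fun q : ℝ × 𝓧 =>
        condCDF (P.map (fun ω => (X ω, Y ω))) q.2 q.1 :=
      (measurable_condCDF' _).comp measurable_swap
    rw [loss_eq P X Y Z hX hY hZ hindep _ hGmeas]
    have hswap : ((P.map X).prod (P.map Z)).map Prod.swap = (P.map Z).prod (P.map X) :=
      Measure.prod_swap
    rw [← hswap] at hae
    have hae2 := ae_of_ae_map measurable_swap.aemeasurable hae
    have hae3 := Measure.ae_ae_of_ae_prod hae2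
    refine lintegral_congr_ae ?_
    filter_upwards [hae3] with x hx
    refine lintegral_congr_ae ?_
    filter_upwards [hx] with z hz
    exact gibbs_eq hz
end

section
/- (Uniqueness of the g-loss minimizer.) In the setting of the g-loss optimality result — (Ω, P) a probability space, X : Ω → 𝒳 standard Borel, Y : Ω → ℝ with conditional CDF F(x, z), and Z independent of (X, Y) with law ν — if a jointly measurable g : ℝ × 𝒳 → (0,1) satisfies E[ℓ(1_{Y ≤ Z}, g(Z, X))] = ∫∫ H(F(x, z)) dν(z) dμ_X(x) (i.e. g attains the minimal loss), then g(z, x) = F(x, z) for ν ⊗ μ_X-almost every (z, x). -/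
open MeasureTheory ProbabilityTheory

lemma binEntropy'_nonneg {t : ℝ} (h0 : 0 ≤ t) (h1 : t ≤ 1) : 0 ≤ binEntropy' t := by
  have h2 : t * Real.log t ≤ 0 :=
    mul_nonpos_of_nonneg_of_nonpos h0 (Real.log_nonpos h0 h1)
  have h3 : (1 - t) * Real.log (1 - t) ≤ 0 :=
    mul_nonpos_of_nonneg_of_nonpos (by linarith) (Real.log_nonpos (by linarith) (by linarith))
  simp only [binEntropy']
  linarith

lemma bce_sub_entropy (t p : ℝ) :
    bce t p - binEntropy' t
      = t * (Real.log t - Real.log p) + (1 - t) * (Real.log (1 - t) - Real.log (1 - p)) := by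
  simp only [bce, binEntropy']; ring

lemma term_ge {t p : ℝ} (ht : 0 < t) (hp : 0 < p) :
    t - p ≤ t * (Real.log t - Real.log p) := by
  have h := Real.log_le_sub_one_of_pos (div_pos hp ht)
  rw [Real.log_div hp.ne' ht.ne'] at h
  have h2 := mul_le_mul_of_nonneg_left h ht.le
  have h3 : t * (p / t - 1) = p - t := by field_simp
  nlinarith

lemma term_gt {t p : ℝ} (ht : 0 < t) (hp : 0 < p) (hne : p ≠ t) :
    t - p < t * (Real.log t - Real.log p) := by
  have hpt : p / t ≠ 1 := fun hE => hne ((div_eq_one_iff_eq ht.ne').mp hE)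
  have h := Real.log_lt_sub_one_of_pos (div_pos hp ht) hpt
  rw [Real.log_div hp.ne' ht.ne'] at h
  have h2 := mul_lt_mul_of_pos_left h ht
  have h3 : t * (p / t - 1) = p - t := by field_simp
  nlinarith

lemma bce_key {t p : ℝ} (ht0 : 0 ≤ t) (ht1 : t ≤ 1) (hp0 : 0 < p) (hp1 : p < 1) :
    binEntropy' t ≤ bce t p ∧ (bce t p = binEntropy' t → p = t) := by
  rcases eq_or_lt_of_le ht0 with h0 | h0
  · -- t = 0
    have ht : t = 0 := h0.symm
    subst ht
    have hb : bce 0 p = -Real.log (1 - p) := by simp [bce]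
    have hH : binEntropy' 0 = 0 := by simp [binEntropy']
    have hlog : Real.log (1 - p) < 0 := Real.log_neg (by linarith) (by linarith)
    constructor
    · rw [hb, hH]; linarith
    · intro h; rw [hb, hH] at h; linarith
  rcases eq_or_lt_of_le ht1 with h1 | h1
  · -- t = 1
    subst h1
    have hb : bce 1 p = -Real.log p := by simp [bce]
    have hH : binEntropy' 1 = 0 := by simp [binEntropy']
    have hlog : Real.log p < 0 := Real.log_neg hp0 hp1
    constructor
    · rw [hb, hH]; linarith
    · intro h; rw [hb, hH] at h; linarith
  · -- 0 < t < 1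
    have hsum := bce_sub_entropy t p
    have k1 : t - p ≤ t * (Real.log t - Real.log p) := term_ge h0 hp0
    have k2 : (1 - t) - (1 - p) ≤ (1 - t) * (Real.log (1 - t) - Real.log (1 - p)) :=
      term_ge (by linarith) (by linarith)
    constructor
    · linarith
    · intro heq
      by_contra hne
      have k1' : t - p < t * (Real.log t - Real.log p) := term_gt h0 hp0 hne
      linarith

lemma lintegral_bce_indicator (κ : Measure ℝ) [IsProbabilityMeasure κ] (z p F : ℝ)
    (hp0 : 0 < p) (hp1 : p < 1) (hF0 : 0 ≤ F) (hF1 : F ≤ 1)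
    (hF : κ (Set.Iic z) = ENNReal.ofReal F) :
    ∫⁻ y, ENNReal.ofReal (bce (if y ≤ z then 1 else 0) p) ∂κ = ENNReal.ofReal (bce F p) := by
  have hmeas : MeasurableSet (Set.Iic z) := measurableSet_Iic
  have hrw : (fun y => ENNReal.ofReal (bce (if y ≤ z then 1 else 0) p))
      = fun y => Set.indicator (Set.Iic z) (fun _ => ENNReal.ofReal (-Real.log p)) y
        + Set.indicator (Set.Iic z)ᶜ (fun _ => ENNReal.ofReal (-Real.log (1 - p))) y := by
    funext y
    by_cases hy : y ≤ z
    · simp [Set.indicator, hy, bce, not_lt.mpr hy]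
    · simp [Set.indicator, hy, bce, lt_of_not_ge hy]
  rw [hrw, lintegral_add_left (measurable_const.indicator hmeas),
    lintegral_indicator_const hmeas, lintegral_indicator_const hmeas.compl,
    prob_compl_eq_one_sub hmeas, hF]
  have hc : (1 : ENNReal) - ENNReal.ofReal F = ENNReal.ofReal (1 - F) := by
    rw [ENNReal.ofReal_sub 1 hF0, ENNReal.ofReal_one]
  rw [hc]
  have hlp : 0 ≤ -Real.log p := by
    have := Real.log_neg hp0 hp1; linarith
  have hlp' : 0 ≤ -Real.log (1 - p) := by
    have := Real.log_neg (by linarith : (0:ℝ) < 1 - p) (by linarith); linarith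
  rw [← ENNReal.ofReal_mul hlp, ← ENNReal.ofReal_mul hlp',
    ← ENNReal.ofReal_add (mul_nonneg hlp hF0) (mul_nonneg hlp' (by linarith))]
  congr 1
  simp only [bce]; ring

lemma measurable_condCDF_prod {𝓧 : Type*} [MeasurableSpace 𝓧] (ρ : Measure (𝓧 × ℝ))
    [IsFiniteMeasure ρ] :
    Measurable fun q : 𝓧 × ℝ => condCDF ρ q.1 q.2 := by
  set κF := (isCondKernelCDF_condCDF ρ).toKernel _ with hκF
  haveI : IsMarkovKernel κF := by rw [hκF]; infer_instance
  set η := κF.comap (fun q : 𝓧 × ℝ => ((), q.1)) (measurable_const.prodMk measurable_fst)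
    with hη
  have ht : MeasurableSet {q : (𝓧 × ℝ) × ℝ | q.2 ≤ q.1.2} :=
    measurableSet_le measurable_snd measurable_fst.snd
  have h1 : Measurable fun a : 𝓧 × ℝ =>
      η a (Prod.mk a ⁻¹' {q : (𝓧 × ℝ) × ℝ | q.2 ≤ q.1.2}) :=
    Kernel.measurable_kernel_prodMk_left ht
  have h2 : (fun a : 𝓧 × ℝ => η a (Prod.mk a ⁻¹' {q : (𝓧 × ℝ) × ℝ | q.2 ≤ q.1.2}))
      = fun a : 𝓧 × ℝ => ENNReal.ofReal (condCDF ρ a.1 a.2) := by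
    funext a
    have hpre : (Prod.mk a ⁻¹' {q : (𝓧 × ℝ) × ℝ | q.2 ≤ q.1.2}) = Set.Iic a.2 := by
      ext y; simp [Set.mem_Iic]
    rw [hpre, hη, Kernel.comap_apply]
    exact (isCondKernelCDF_condCDF ρ).toKernel_Iic ((), a.1) a.2
  rw [h2] at h1
  have h3 : (fun q : 𝓧 × ℝ => condCDF ρ q.1 q.2)
      = fun q : 𝓧 × ℝ => (ENNReal.ofReal (condCDF ρ q.1 q.2)).toReal := by
    funext q; rw [ENNReal.toReal_ofReal (condCDF_nonneg ρ q.1 q.2)]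
  rw [h3]
  exact h1.ennreal_toReal

/-- (Uniqueness of the g-loss minimizer.) In the setting of the g-loss optimality result —
`X : Ω → 𝒳` standard Borel, `Y : Ω → ℝ` with conditional CDF
`F(x, z) = condCDF (law of (X, Y)) x z`, and `Z` independent of `(X, Y)` with law `ν = P.map Z`
— if a jointly measurable `g : ℝ × 𝒳 → (0,1)` attains the minimal (finite) loss
`E[ℓ(1_{Y ≤ Z}, g(Z, X))] = ∫∫ H(F(x, z)) dν(z) dμ_X(x)`, then `g(z, x) = F(x, z)` for
`ν ⊗ μ_X`-almost every `(z, x)`. -/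
theorem gloss_minimizer_unique
    {𝓧 : Type*} [MeasurableSpace 𝓧] [StandardBorelSpace 𝓧]
    {Ω : Type*} [MeasurableSpace Ω] (P : Measure Ω) [IsProbabilityMeasure P]
    (X : Ω → 𝓧) (Y Z : Ω → ℝ) (hX : Measurable X) (hY : Measurable Y) (hZ : Measurable Z)
    (hindep : IndepFun (fun ω => (X ω, Y ω)) Z P)
    (g : ℝ × 𝓧 → ℝ) (hg : Measurable g) (hg01 : ∀ p, g p ∈ Set.Ioo (0 : ℝ) 1)
    (hfin : ∫⁻ x, ∫⁻ z, ENNReal.ofReal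
        (binEntropy' (condCDF (P.map (fun ω => (X ω, Y ω))) x z)) ∂(P.map Z) ∂(P.map X) ≠ ⊤)
    (hmin : ∫⁻ ω, ENNReal.ofReal
          (bce (if Y ω ≤ Z ω then 1 else 0) (g (Z ω, X ω))) ∂P
        = ∫⁻ x, ∫⁻ z, ENNReal.ofReal
            (binEntropy' (condCDF (P.map (fun ω => (X ω, Y ω))) x z)) ∂(P.map Z) ∂(P.map X)) :
    ∀ᵐ p ∂((P.map Z).prod (P.map X)),
      g p = condCDF (P.map (fun ω => (X ω, Y ω))) p.2 p.1 := by
  set ρ : Measure (𝓧 × ℝ) := P.map (fun ω => (X ω, Y ω)) with hρ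
  set ν : Measure ℝ := P.map Z with hν
  set μ : Measure 𝓧 := P.map X with hμ
  have hXY : Measurable fun ω => (X ω, Y ω) := hX.prodMk hY
  haveI : IsProbabilityMeasure ρ := Measure.isProbabilityMeasure_map hXY.aemeasurable
  haveI : IsProbabilityMeasure ν := Measure.isProbabilityMeasure_map hZ.aemeasurable
  haveI : IsProbabilityMeasure μ := Measure.isProbabilityMeasure_map hX.aemeasurable
  have hfst : ρ.fst = μ := by
    rw [hρ, hμ, Measure.fst, Measure.map_map measurable_fst hXY]
    rfl
  have hFmeas : Measurable fun q : 𝓧 × ℝ => condCDF ρ q.1 q.2 := measurable_condCDF_prod ρ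
  have hF0 : ∀ x z, 0 ≤ condCDF ρ x z := fun x z => condCDF_nonneg ρ x z
  have hF1 : ∀ x z, condCDF ρ x z ≤ 1 := fun x z => condCDF_le_one ρ x z
  set κF := (isCondKernelCDF_condCDF ρ).toKernel _ with hκF
  haveI : IsMarkovKernel κF := by rw [hκF]; infer_instance
  have hκIic : ∀ x z, κF ((), x) (Set.Iic z) = ENNReal.ofReal (condCDF ρ x z) :=
    fun x z => (isCondKernelCDF_condCDF ρ).toKernel_Iic ((), x) z
  have hmap : P.map (fun ω => ((X ω, Y ω), Z ω)) = ρ.prod ν :=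
    (indepFun_iff_map_prod_eq_prod_map_map hXY.aemeasurable hZ.aemeasurable).mp hindep
  set h : (𝓧 × ℝ) × ℝ → ENNReal :=
    fun q => ENNReal.ofReal (bce (if q.1.2 ≤ q.2 then 1 else 0) (g (q.2, q.1.1))) with hh
  have hhmeas : Measurable h := by
    have hg' : Measurable fun q : (𝓧 × ℝ) × ℝ => g (q.2, q.1.1) :=
      hg.comp (measurable_snd.prodMk measurable_fst.fst)
    have hrw : h = fun q => if q.1.2 ≤ q.2 then ENNReal.ofReal (-Real.log (g (q.2, q.1.1)))
        else ENNReal.ofReal (-Real.log (1 - g (q.2, q.1.1))) := by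
      funext q; rw [hh]; by_cases hq : q.1.2 ≤ q.2 <;> simp [hq, bce]
    rw [hrw]
    exact Measurable.ite (measurableSet_le measurable_fst.snd measurable_snd)
      ((Real.measurable_log.comp hg').neg.ennreal_ofReal)
      ((Real.measurable_log.comp (measurable_const.sub hg')).neg.ennreal_ofReal)
  have hLHS : ∫⁻ ω, ENNReal.ofReal (bce (if Y ω ≤ Z ω then 1 else 0) (g (Z ω, X ω))) ∂P
      = ∫⁻ q, h q ∂(ρ.prod ν) := by
    rw [← hmap, lintegral_map hhmeas (hXY.prodMk hZ)]
  have hprod : ∫⁻ q, h q ∂(ρ.prod ν) = ∫⁻ xy, ∫⁻ z, h (xy, z) ∂ν ∂ρ :=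
    lintegral_prod h hhmeas.aemeasurable
  have hdis : ρ = (Kernel.const Unit ρ.fst ⊗ₖ κF) () := by
    rw [hκF, compProd_toKernel (isCondKernelCDF_condCDF ρ), Kernel.const_apply]
  have hG : Measurable fun xy : 𝓧 × ℝ => ∫⁻ z, h (xy, z) ∂ν := hhmeas.lintegral_prod_right'
  have hstep : ∫⁻ xy, ∫⁻ z, h (xy, z) ∂ν ∂ρ
      = ∫⁻ x, ∫⁻ y, ∫⁻ z, h ((x, y), z) ∂ν ∂(κF ((), x)) ∂ρ.fst := by
    conv_lhs => rw [hdis]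
    rw [Kernel.lintegral_compProd _ _ _ hG]
    simp [Kernel.const_apply]
  have hswap : ∀ x : 𝓧, ∫⁻ y, ∫⁻ z, h ((x, y), z) ∂ν ∂(κF ((), x))
      = ∫⁻ z, ∫⁻ y, h ((x, y), z) ∂(κF ((), x)) ∂ν := by
    intro x
    exact lintegral_lintegral_swap
      ((hhmeas.comp ((measurable_const.prodMk measurable_fst).prodMk
        measurable_snd)).aemeasurable)
  have hinner : ∀ (x : 𝓧) (z : ℝ), ∫⁻ y, h ((x, y), z) ∂(κF ((), x))
      = ENNReal.ofReal (bce (condCDF ρ x z) (g (z, x))) := by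
    intro x z
    exact lintegral_bce_indicator (κF ((), x)) z (g (z, x)) (condCDF ρ x z)
      (hg01 _).1 (hg01 _).2 (hF0 x z) (hF1 x z) (hκIic x z)
  have hLHS2 : ∫⁻ ω, ENNReal.ofReal (bce (if Y ω ≤ Z ω then 1 else 0) (g (Z ω, X ω))) ∂P
      = ∫⁻ x, ∫⁻ z, ENNReal.ofReal (bce (condCDF ρ x z) (g (z, x))) ∂ν ∂μ := by
    rw [hLHS, hprod, hstep, hfst]
    refine lintegral_congr fun x => ?_
    rw [hswap x]
    exact lintegral_congr fun z => hinner x z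
  -- now compare with the entropy integral over the product μ.prod ν
  have hgmeas' : Measurable fun q : 𝓧 × ℝ => g (q.2, q.1) :=
    hg.comp (measurable_snd.prodMk measurable_fst)
  have hAmeas : Measurable fun q : 𝓧 × ℝ =>
      ENNReal.ofReal (bce (condCDF ρ q.1 q.2) (g (q.2, q.1))) := by
    apply Measurable.ennreal_ofReal
    simp only [bce]
    exact ((hFmeas.mul (Real.measurable_log.comp hgmeas')).add
      ((measurable_const.sub hFmeas).mul
        (Real.measurable_log.comp (measurable_const.sub hgmeas')))).neg
  have hBmeas : Measurable fun q : 𝓧 × ℝ =>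
      ENNReal.ofReal (binEntropy' (condCDF ρ q.1 q.2)) := by
    apply Measurable.ennreal_ofReal
    simp only [binEntropy']
    exact ((hFmeas.mul (Real.measurable_log.comp hFmeas)).add
      ((measurable_const.sub hFmeas).mul
        (Real.measurable_log.comp (measurable_const.sub hFmeas)))).neg
  have hBA : ∀ q : 𝓧 × ℝ, ENNReal.ofReal (binEntropy' (condCDF ρ q.1 q.2))
      ≤ ENNReal.ofReal (bce (condCDF ρ q.1 q.2) (g (q.2, q.1))) := fun q =>
    ENNReal.ofReal_le_ofReal
      (bce_key (hF0 q.1 q.2) (hF1 q.1 q.2) (hg01 (q.2, q.1)).1 (hg01 (q.2, q.1)).2).1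
  have hintA : ∫⁻ q : 𝓧 × ℝ, ENNReal.ofReal (bce (condCDF ρ q.1 q.2) (g (q.2, q.1)))
        ∂(μ.prod ν)
      = ∫⁻ x, ∫⁻ z, ENNReal.ofReal (bce (condCDF ρ x z) (g (z, x))) ∂ν ∂μ :=
    lintegral_prod _ hAmeas.aemeasurable
  have hintB : ∫⁻ q : 𝓧 × ℝ, ENNReal.ofReal (binEntropy' (condCDF ρ q.1 q.2)) ∂(μ.prod ν)
      = ∫⁻ x, ∫⁻ z, ENNReal.ofReal (binEntropy' (condCDF ρ x z)) ∂ν ∂μ :=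
    lintegral_prod _ hBmeas.aemeasurable
  have hEq : ∫⁻ q : 𝓧 × ℝ, ENNReal.ofReal (bce (condCDF ρ q.1 q.2) (g (q.2, q.1)))
        ∂(μ.prod ν)
      = ∫⁻ q : 𝓧 × ℝ, ENNReal.ofReal (binEntropy' (condCDF ρ q.1 q.2)) ∂(μ.prod ν) := by
    rw [hintA, hintB, ← hLHS2]
    exact hmin
  have hBfin : ∫⁻ q : 𝓧 × ℝ, ENNReal.ofReal (binEntropy' (condCDF ρ q.1 q.2)) ∂(μ.prod ν)
      ≠ ⊤ := by
    rw [hintB]; exact hfin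
  have haeAB : (fun q : 𝓧 × ℝ => ENNReal.ofReal (bce (condCDF ρ q.1 q.2) (g (q.2, q.1))))
      =ᵐ[μ.prod ν] fun q => ENNReal.ofReal (binEntropy' (condCDF ρ q.1 q.2)) := by
    have hsub : ∫⁻ q : 𝓧 × ℝ, (ENNReal.ofReal (bce (condCDF ρ q.1 q.2) (g (q.2, q.1)))
        - ENNReal.ofReal (binEntropy' (condCDF ρ q.1 q.2))) ∂(μ.prod ν) = 0 := by
      rw [lintegral_sub hBmeas hBfin (Filter.Eventually.of_forall hBA), hEq, tsub_self]
    have h0 := (lintegral_eq_zero_iff (hAmeas.sub hBmeas)).mp hsub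
    filter_upwards [h0] with q hq
    have hle : ENNReal.ofReal (bce (condCDF ρ q.1 q.2) (g (q.2, q.1)))
        ≤ ENNReal.ofReal (binEntropy' (condCDF ρ q.1 q.2)) := by
      have : ENNReal.ofReal (bce (condCDF ρ q.1 q.2) (g (q.2, q.1)))
          - ENNReal.ofReal (binEntropy' (condCDF ρ q.1 q.2)) = 0 := hq
      exact tsub_eq_zero_iff_le.mp this
    exact le_antisymm hle (hBA q)
  have hae : ∀ᵐ q ∂(μ.prod ν), g (q.2, q.1) = condCDF ρ q.1 q.2 := by
    filter_upwards [haeAB] with q hq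
    have hFq0 := hF0 q.1 q.2
    have hFq1 := hF1 q.1 q.2
    have hkey := bce_key hFq0 hFq1 (hg01 (q.2, q.1)).1 (hg01 (q.2, q.1)).2
    have hH0 : 0 ≤ binEntropy' (condCDF ρ q.1 q.2) := binEntropy'_nonneg hFq0 hFq1
    have hb0 : 0 ≤ bce (condCDF ρ q.1 q.2) (g (q.2, q.1)) := le_trans hH0 hkey.1
    have heq : bce (condCDF ρ q.1 q.2) (g (q.2, q.1)) = binEntropy' (condCDF ρ q.1 q.2) :=
      (ENNReal.ofReal_eq_ofReal_iff hb0 hH0).mp hq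
    exact hkey.2 heq
  have hset : MeasurableSet {p : ℝ × 𝓧 | g p = condCDF ρ p.2 p.1} :=
    measurableSet_eq_fun hg (hFmeas.comp (measurable_snd.prodMk measurable_fst))
  rw [← Measure.prod_swap]
  rw [ae_map_iff measurable_swap.aemeasurable hset]
  filter_upwards [hae] with q hq
  simpa [Prod.swap] using hq
end

section
/- (Proposition S5: generalization of the g-loss minimizer under covariate shift.) Let 𝒳 be a standard Borel space, κ a Markov kernel from 𝒳 to ℝ (the common conditional outcome distribution), ν a probability measure on ℝ, and let μ and μ' be probability measures on 𝒳 (training and evaluation covariate distributions) with μ' absolutely continuous with respect to μ. For a probability measure m on 𝒳, define the loss L_m(g) = ∫_𝒳 ∫_ℝ ∫_ℝ ℓ(1_{y ≤ z}, g(z, x)) dκ(x)(y) dν(z) dm(x) for jointly measurable g : ℝ × 𝒳 → (0,1). If g minimizes L_μ over all jointly measurable (0,1)-valued functions, then g also minimizes L_{μ'} over all such functions; i.e. the optimum learned on the training covariate space generalizes to any evaluation covariate space whose support is covered by the training space, provided the conditional outcome distribution is invariant (covariate shift). -/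
/-! The g-loss is the `m`-integral of a pointwise loss `x ↦ ∫∫ ℓ dκ(x) dν` that does not depend on
`m`. Since the admissible class is closed under patching two functions along a measurable set of
covariates, a minimiser of `L_μ` (whose loss is finite, as the constant `1/2` has loss `log 2`)
must minimise the pointwise loss `μ`-almost everywhere, hence `μ'`-almost everywhere when
`μ' ≪ μ`, and integrating against `μ'` gives the claim. -/

open MeasureTheory ProbabilityTheory
open scoped ENNReal

/-- The g-loss `L_m(g) = ∫∫∫ ℓ(1_{y ≤ z}, g(z, x)) dκ(x)(y) dν(z) dm(x)` for a covariate
distribution `m`, conditional-outcome kernel `κ` and searching distribution `ν`. -/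
noncomputable def kernelGLoss {𝓧 : Type*} [MeasurableSpace 𝓧]
    (κ : ProbabilityTheory.Kernel 𝓧 ℝ) (ν : Measure ℝ) (m : Measure 𝓧)
    (g : ℝ × 𝓧 → ℝ) : ℝ≥0∞ :=
  ∫⁻ x, ∫⁻ z, ∫⁻ y, ENNReal.ofReal (bce (if y ≤ z then 1 else 0) (g (z, x))) ∂(κ x) ∂ν ∂m

namespace MeasureTheory

variable {α : Type*} [MeasurableSpace α] {μ : Measure α}

theorem ae_le_of_lintegral_le_lintegral_piecewise [SigmaFinite μ] {f f' : α → ℝ≥0∞}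
    (hf : Measurable f) (hfin : ∫⁻ x, f x ∂μ ≠ ∞)
    (h : ∀ s, MeasurableSet s → ∀ [DecidablePred (· ∈ s)],
      ∫⁻ x, f x ∂μ ≤ ∫⁻ x, s.piecewise f' f x ∂μ) :
    f ≤ᵐ[μ] f' := by
  classical
  refine ae_le_of_forall_setLIntegral_le_of_sigmaFinite hf fun s hs _ => ?_
  have hle := h s hs
  rw [← lintegral_add_compl f hs, lintegral_piecewise hs] at hle
  have hcompl : ∫⁻ x in sᶜ, f x ∂μ ≠ ∞ :=
    ne_top_of_le_ne_top hfin (setLIntegral_le_lintegral _ _)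
  exact ENNReal.le_of_add_le_add_right hcompl hle

end MeasureTheory

section GLoss

variable {𝓧 : Type*} [MeasurableSpace 𝓧]

theorem bce_inv_two (t : ℝ) : bce t 2⁻¹ = Real.log 2 := by
  rw [bce, show (1 : ℝ) - 2⁻¹ = 2⁻¹ by norm_num, Real.log_inv]
  ring

theorem measurable_bce : Measurable fun q : ℝ × ℝ => bce q.1 q.2 := by
  unfold bce
  fun_prop

noncomputable def pointwiseGLoss (κ : Kernel 𝓧 ℝ) (ν : Measure ℝ) (g : ℝ × 𝓧 → ℝ) (x : 𝓧) :
    ℝ≥0∞ :=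
  ∫⁻ z, ∫⁻ y, ENNReal.ofReal (bce (if y ≤ z then 1 else 0) (g (z, x))) ∂(κ x) ∂ν

theorem measurable_pointwiseGLoss (κ : Kernel 𝓧 ℝ) [IsSFiniteKernel κ] (ν : Measure ℝ)
    [SFinite ν] {g : ℝ × 𝓧 → ℝ} (hg : Measurable g) :
    Measurable (pointwiseGLoss κ ν g) := by
  have hloss : Measurable fun q : (𝓧 × ℝ) × ℝ =>
      ENNReal.ofReal (bce (if q.2 ≤ q.1.2 then 1 else 0) (g (q.1.2, q.1.1))) := by
    refine ENNReal.measurable_ofReal.comp (measurable_bce.comp (Measurable.prodMk ?_ ?_))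
    · exact Measurable.ite (measurableSet_le measurable_snd measurable_fst.snd)
        measurable_const measurable_const
    · exact hg.comp (measurable_fst.snd.prodMk measurable_fst.fst)
  have hinner : Measurable fun p : 𝓧 × ℝ =>
      ∫⁻ y, ENNReal.ofReal (bce (if y ≤ p.2 then 1 else 0) (g (p.2, p.1))) ∂(κ p.1) := by
    simpa only [Kernel.prodMkRight_apply] using
      Measurable.lintegral_kernel_prod_right (κ := κ.prodMkRight ℝ)
        (f := fun p y => ENNReal.ofReal (bce (if y ≤ p.2 then 1 else 0) (g (p.2, p.1)))) hloss
  exact hinner.lintegral_prod_right'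

theorem pointwiseGLoss_piecewise (κ : Kernel 𝓧 ℝ) (ν : Measure ℝ) (g g' : ℝ × 𝓧 → ℝ)
    (s : Set 𝓧) [DecidablePred (· ∈ s)] :
    pointwiseGLoss κ ν (fun p => if p.2 ∈ s then g' p else g p) =
      s.piecewise (pointwiseGLoss κ ν g') (pointwiseGLoss κ ν g) := by
  funext x
  by_cases hx : x ∈ s <;> simp only [pointwiseGLoss, Set.piecewise, hx, if_true, if_false]

theorem kernelGLoss_const_inv_two (κ : Kernel 𝓧 ℝ) [IsMarkovKernel κ] (ν : Measure ℝ)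
    [IsProbabilityMeasure ν] (m : Measure 𝓧) [IsProbabilityMeasure m] :
    kernelGLoss κ ν m (fun _ => 2⁻¹) = ENNReal.ofReal (Real.log 2) := by
  simp [kernelGLoss, bce_inv_two]

end GLoss

theorem gloss_minimizer_generalizes_under_covariate_shift_general
    {𝓧 : Type*} [MeasurableSpace 𝓧]
    (κ : ProbabilityTheory.Kernel 𝓧 ℝ) [ProbabilityTheory.IsMarkovKernel κ]
    (ν : Measure ℝ) [IsProbabilityMeasure ν]
    (μ μ' : Measure 𝓧) [IsProbabilityMeasure μ]
    (hac : μ' ≪ μ)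
    (g : ℝ × 𝓧 → ℝ) (hg : Measurable g) (hg01 : ∀ p, g p ∈ Set.Ioo (0 : ℝ) 1)
    (hmin : ∀ g' : ℝ × 𝓧 → ℝ, Measurable g' → (∀ p, g' p ∈ Set.Ioo (0 : ℝ) 1) →
      kernelGLoss κ ν μ g ≤ kernelGLoss κ ν μ g') :
    ∀ g' : ℝ × 𝓧 → ℝ, Measurable g' → (∀ p, g' p ∈ Set.Ioo (0 : ℝ) 1) →
      kernelGLoss κ ν μ' g ≤ kernelGLoss κ ν μ' g' := by
  intro g' hg' hg'01
  have hfin : kernelGLoss κ ν μ g ≠ ∞ := by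
    refine ne_top_of_le_ne_top ?_
      (hmin (fun _ => 2⁻¹) measurable_const fun _ => ⟨by norm_num, by norm_num⟩)
    rw [kernelGLoss_const_inv_two]
    exact ENNReal.ofReal_ne_top
  have hae : pointwiseGLoss κ ν g ≤ᵐ[μ] pointwiseGLoss κ ν g' := by
    refine ae_le_of_lintegral_le_lintegral_piecewise (measurable_pointwiseGLoss κ ν hg) hfin
      fun s hs _ => ?_
    rw [← pointwiseGLoss_piecewise]
    exact hmin _ (Measurable.ite (hs.preimage measurable_snd) hg' hg) fun p => by
      split_ifs
      exacts [hg'01 p, hg01 p]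
  exact lintegral_mono_ae (hac.ae_le hae)

/-- (Proposition S5: generalization of the g-loss minimizer under covariate shift.) Let `κ` be
a Markov kernel from `𝒳` to `ℝ` (the common conditional outcome distribution), `ν` a
probability measure on `ℝ`, and `μ, μ'` probability measures on `𝒳` (training and evaluation
covariate distributions) with `μ' ≪ μ`. If a jointly measurable `g : ℝ × 𝒳 → (0,1)` minimizes
`L_μ` over all jointly measurable `(0,1)`-valued functions, then `g` also minimizes `L_{μ'}`:
the optimum learned on the training covariate space generalizes to any evaluation covariate
space covered by the training space, provided the conditional outcome distribution is
invariant (covariate shift). -/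
theorem gloss_minimizer_generalizes_under_covariate_shift
    {𝓧 : Type*} [MeasurableSpace 𝓧]
    (κ : ProbabilityTheory.Kernel 𝓧 ℝ) [ProbabilityTheory.IsMarkovKernel κ]
    (ν : Measure ℝ) [IsProbabilityMeasure ν]
    (μ μ' : Measure 𝓧) [IsProbabilityMeasure μ] [IsProbabilityMeasure μ']
    (hac : μ' ≪ μ)
    (g : ℝ × 𝓧 → ℝ) (hg : Measurable g) (hg01 : ∀ p, g p ∈ Set.Ioo (0 : ℝ) 1)
    (hmin : ∀ g' : ℝ × 𝓧 → ℝ, Measurable g' → (∀ p, g' p ∈ Set.Ioo (0 : ℝ) 1) →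
      kernelGLoss κ ν μ g ≤ kernelGLoss κ ν μ g') :
    ∀ g' : ℝ × 𝓧 → ℝ, Measurable g' → (∀ p, g' p ∈ Set.Ioo (0 : ℝ) 1) →
      kernelGLoss κ ν μ' g ≤ kernelGLoss κ ν μ' g' :=
  gloss_minimizer_generalizes_under_covariate_shift_general κ ν μ μ' hac g hg hg01 hmin
end
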